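/- arXiv:2503.15950 — 2 statements merged into one kernel-verified Lean document; each statement's English description precedes it below -/
import Mathlib

section
/- Let n = 4k+1 with k ≥ 2, and let X, Y be disjoint sets with |X| = 2k+1, |Y| = 2k. Pick a_1, a_2, a_3 ∈ X distinct and b_1, b_2, b_3 ∈ Y distinct. Let G_3 be the graph on X ∪ Y whose edges are all pairs inside X, all pairs inside Y, and the three edges a_1b_1, a_2b_2, a_3b_3. Then every Hamilton cycle of G_3 contains an even number of edges of G_3[X] (the complete graph on X), and consequently C_n(G_3) ≠ C(G_3), i.e., G_3 is not Hamilton-generated. -/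
open SimpleGraph

variable {V : Type} [Fintype V] [DecidableEq V]

/-- Indicator vector over F₂ of a list of edges. -/
def edgeIndicator (l : List (Sym2 V)) : Sym2 V → ZMod 2 :=
  fun e => if e ∈ l then 1 else 0

/-- The cycle space of a graph: the F₂-span of edge sets of cycles. -/
def cycleSpace (G : SimpleGraph V) : Submodule (ZMod 2) (Sym2 V → ZMod 2) :=
  Submodule.span (ZMod 2)
    {f | ∃ (u : V) (c : G.Walk u u), c.IsCycle ∧ f = edgeIndicator c.edges}

/-- The subspace of the cycle space generated by cycles of length exactly `k`. -/
def cycleSpaceLen (G : SimpleGraph V) (k : ℕ) : Submodule (ZMod 2) (Sym2 V → ZMod 2) :=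
  Submodule.span (ZMod 2)
    {f | ∃ (u : V) (c : G.Walk u u), c.IsCycle ∧ c.length = k ∧ f = edgeIndicator c.edges}

/-!
Along a closed walk, every visit to a vertex of `X` is seen by two incident edges, so
`2 · #(edges inside X) + #(edges crossing X) = 2 · #(visits to X)`.
For a Hamilton cycle of `G3` the right side is `2 (2k + 1)`; the crossing edges are among the
three edges `aᵢbᵢ`, and there is at least one since the cycle visits both `a1 ∈ X` and `b1 ∉ X`.
Hence exactly two edges cross and `2k` lie inside `X`. Counting edges inside `X` modulo 2 is
therefore a linear functional vanishing on all Hamilton cycles but not on the triangle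
`a1 a2 a3`.
-/

lemma List.Nodup.countP_eq_card_toFinset_filter {α : Type*} [DecidableEq α] {l : List α}
    (hl : l.Nodup) (q : α → Bool) : l.countP q = (l.filter q).toFinset.card := by
  rw [List.countP_eq_length_filter, List.toFinset_card_of_nodup (hl.filter q)]

lemma List.Nodup.ncard_setOf_mem_and {α : Type*} {l : List α} (hl : l.Nodup) (q : α → Bool) :
    {x | x ∈ l ∧ q x = true}.ncard = l.countP q := by
  classical
  rw [hl.countP_eq_card_toFinset_filter, ← Set.ncard_coe_finset]
  congr 1
  ext
  simp

lemma List.Nodup.countP_le_card {α : Type*} [DecidableEq α] {l : List α} (hl : l.Nodup)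
    {q : α → Bool} {s : Finset α} (h : ∀ x ∈ l, q x = true → x ∈ s) : l.countP q ≤ s.card := by
  rw [hl.countP_eq_card_toFinset_filter]
  exact Finset.card_le_card fun x hx => by
    rw [List.mem_toFinset, List.mem_filter] at hx
    exact h x hx.1 hx.2

section VertexPredicate

variable {V : Type*} (p : V → Bool)

def edgeInside : Sym2 V → Bool :=
  Sym2.lift ⟨fun x y => p x && p y, fun _ _ => Bool.and_comm ..⟩

def edgeCrosses : Sym2 V → Bool :=
  Sym2.lift ⟨fun x y => xor (p x) (p y), fun _ _ => Bool.xor_comm ..⟩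

@[simp] lemma edgeInside_mk (x y : V) : edgeInside p s(x, y) = (p x && p y) := rfl

@[simp] lemma edgeCrosses_mk (x y : V) : edgeCrosses p s(x, y) = xor (p x) (p y) := rfl

lemma edgeInside_iff (e : Sym2 V) : edgeInside p e = true ↔ ∀ v ∈ e, p v = true := by
  induction e using Sym2.ind with
  | _ x y => simp

namespace SimpleGraph.Walk

variable {G : SimpleGraph V}

/-- Double counting of edge–vertex incidences at vertices satisfying `p`: the endpoints of the
walk have one incident edge fewer. -/
lemma two_mul_countP_edgeInside_add_countP_edgeCrosses {u v : V} (w : G.Walk u v) :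
    2 * w.edges.countP (edgeInside p) + w.edges.countP (edgeCrosses p)
      + (p u).toNat + (p v).toNat = 2 * w.support.countP p := by
  induction w with
  | nil => cases h : p _ <;> simp [h]
  | @cons a b _ _ w ih =>
    simp only [edges_cons, support_cons, List.countP_cons, edgeInside_mk, edgeCrosses_mk]
    rcases Bool.eq_false_or_eq_true (p a) with ha | ha <;>
      rcases Bool.eq_false_or_eq_true (p b) with hb | hb <;> simp [ha, hb] at ih ⊢ <;> omega

lemma two_mul_countP_edgeInside_add_countP_edgeCrosses_of_closed {u : V} (c : G.Walk u u) :
    2 * c.edges.countP (edgeInside p) + c.edges.countP (edgeCrosses p)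
      = 2 * c.support.tail.countP p := by
  have h := two_mul_countP_edgeInside_add_countP_edgeCrosses p c
  rw [← cons_tail_support, List.countP_cons] at h
  rcases Bool.eq_false_or_eq_true (p u) with hu | hu <;> simp [hu] at h <;> omega

lemma exists_edgeCrosses_of_mem_support [DecidableEq V] {u v z : V} (w : G.Walk u v)
    (hz : z ∈ w.support) (hpz : p z ≠ p u) : ∃ e ∈ w.edges, edgeCrosses p e = true := by
  obtain ⟨d, hd, hfst, hsnd⟩ :=
    (w.takeUntil z hz).exists_boundary_dart {x | p x = p u} rfl hpz
  refine ⟨d.edge, w.edges_takeUntil_subset_edges hz (List.mem_map_of_mem hd), ?_⟩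
  change edgeCrosses p s(d.fst, d.snd) = true
  simp only [Set.mem_ofPred_eq] at hfst hsnd
  rw [edgeCrosses_mk, hfst]
  cases h : p u <;> simp_all

lemma isCycle_triangle {a b c : V} (hab : G.Adj a b) (hbc : G.Adj b c) (hca : G.Adj c a) :
    (cons hab (cons hbc (cons hca nil))).IsCycle := by
  have := hab.ne; have := hbc.ne; have := hca.ne
  simp_all [cons_isCycle_iff, eq_comm]

lemma IsHamiltonian.countP_support [Fintype V] [DecidableEq V] {u v : V} {w : G.Walk u v}
    (hw : w.IsHamiltonian) : w.support.countP p = (Finset.univ.filter (p · = true)).card := by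
  rw [hw.isPath.support_nodup.countP_eq_card_toFinset_filter, List.toFinset_filter,
    hw.toFinset_support]

lemma IsHamiltonianCycle.two_mul_countP_edgeInside_add_countP_edgeCrosses [Fintype V]
    [DecidableEq V] {u : V} {c : G.Walk u u} (hc : c.IsHamiltonianCycle) :
    2 * c.edges.countP (edgeInside p) + c.edges.countP (edgeCrosses p)
      = 2 * (Finset.univ.filter (p · = true)).card := by
  rw [two_mul_countP_edgeInside_add_countP_edgeCrosses_of_closed, ←
    c.support_tail_of_not_nil hc.not_nil, hc.isHamiltonian_tail.countP_support]

end SimpleGraph.Walk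

end VertexPredicate

def edgeParity (q : Sym2 V → Bool) : (Sym2 V → ZMod 2) →ₗ[ZMod 2] ZMod 2 :=
  ∑ e ∈ Finset.univ.filter (q · = true), LinearMap.proj e

lemma edgeParity_edgeIndicator (q : Sym2 V → Bool) {l : List (Sym2 V)} (hl : l.Nodup) :
    edgeParity q (edgeIndicator l) = l.countP q := by
  simp only [edgeParity, LinearMap.sum_apply, LinearMap.proj_apply, edgeIndicator,
    Finset.sum_boole, Finset.filter_filter]
  rw [hl.countP_eq_card_toFinset_filter]
  congr 2
  ext e
  simp [and_comm]

lemma cycleSpaceLen_ne_cycleSpace_of_parity (G : SimpleGraph V) (n : ℕ) (q : Sym2 V → Bool)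
    (heven : ∀ u (c : G.Walk u u), c.IsCycle → c.length = n → Even (c.edges.countP q))
    {u : V} (t : G.Walk u u) (ht : t.IsCycle) (hodd : Odd (t.edges.countP q)) :
    cycleSpaceLen G n ≠ cycleSpace G := by
  have hle : cycleSpaceLen G n ≤ LinearMap.ker (edgeParity q) := by
    rw [cycleSpaceLen, Submodule.span_le]
    rintro _ ⟨u, c, hc, hlen, rfl⟩
    rw [SetLike.mem_coe, LinearMap.mem_ker, edgeParity_edgeIndicator q hc.edges_nodup,
      ZMod.natCast_eq_zero_iff_even]
    exact heven u c hc hlen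
  intro heq
  have ht' : edgeIndicator t.edges ∈ cycleSpaceLen G n :=
    heq ▸ Submodule.subset_span ⟨u, t, ht, rfl⟩
  have := hle ht'
  rw [LinearMap.mem_ker, edgeParity_edgeIndicator q ht.edges_nodup,
    ZMod.natCast_eq_zero_iff_even] at this
  exact Nat.not_even_iff_odd.2 hodd this

section ConstructionA

variable {V : Type*} {X Y : Set V} {a1 a2 a3 b1 b2 b3 : V} {G3 : SimpleGraph V}

def IsCliquesJoinedByThreeEdges (G3 : SimpleGraph V) (X Y : Set V) (a1 a2 a3 b1 b2 b3 : V) :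
    Prop :=
  ∀ x y, G3.Adj x y ↔
    ((x ≠ y ∧ ((x ∈ X ∧ y ∈ X) ∨ (x ∈ Y ∧ y ∈ Y))) ∨
      ({x, y} : Set V) = {a1, b1} ∨ ({x, y} : Set V) = {a2, b2} ∨
      ({x, y} : Set V) = {a3, b3})

variable [DecidableEq V]

lemma edgeCrosses_mem_of_adj [DecidablePred (· ∈ X)] (hdis : Disjoint X Y)
    (hG3 : IsCliquesJoinedByThreeEdges G3 X Y a1 a2 a3 b1 b2 b3)
    {x y : V} (hxy : G3.Adj x y) (hcr : edgeCrosses (· ∈ X) s(x, y) = true) :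
    s(x, y) ∈ ({s(a1, b1), s(a2, b2), s(a3, b3)} : Finset (Sym2 V)) := by
  rcases (hG3 x y).1 hxy with ⟨-, ⟨hx, hy⟩ | ⟨hx, hy⟩⟩ | h | h | h
  · simp [hx, hy] at hcr
  · simp [hdis.notMem_of_mem_right hx, hdis.notMem_of_mem_right hy] at hcr
  all_goals simp [Set.pair_eq_pair_iff] at h ⊢; tauto

lemma SimpleGraph.Walk.IsHamiltonianCycle.countP_edgeInside_eq [Fintype V]
    [DecidablePred (· ∈ X)] {k : ℕ} (hdis : Disjoint X Y) (hX : X.ncard = 2 * k + 1)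
    (ha1 : a1 ∈ X) (hb1 : b1 ∈ Y) (hG3 : IsCliquesJoinedByThreeEdges G3 X Y a1 a2 a3 b1 b2 b3)
    {u : V} {c : G3.Walk u u} (hc : c.IsHamiltonianCycle) :
    c.edges.countP (edgeInside (· ∈ X)) = 2 * k := by
  have hsum := hc.two_mul_countP_edgeInside_add_countP_edgeCrosses (· ∈ X)
  have hcard : (Finset.univ.filter (fun v => decide (v ∈ X) = true)).card = X.ncard := by
    rw [Set.ncard_eq_toFinset_card']; congr 1; ext; simp
  have hle : c.edges.countP (edgeCrosses (· ∈ X)) ≤ 3 := by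
    refine (hc.edges_nodup.countP_le_card (s := {s(a1, b1), s(a2, b2), s(a3, b3)})
      fun e he hcr => ?_).trans Finset.card_le_three
    induction e using Sym2.ind with
    | _ x y => exact edgeCrosses_mem_of_adj hdis hG3 (c.adj_of_mem_edges he) hcr
  have hpos : 0 < c.edges.countP (edgeCrosses (· ∈ X)) := by
    have hb1X : b1 ∉ X := hdis.notMem_of_mem_right hb1
    rw [List.countP_pos_iff]
    by_cases hu : u ∈ X
    · exact c.exists_edgeCrosses_of_mem_support _ (hc.mem_support b1) (by simp [hu, hb1X])
    · exact c.exists_edgeCrosses_of_mem_support _ (hc.mem_support a1) (by simp [hu, ha1])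
  omega

end ConstructionA

theorem stmt3_general (k : ℕ)
    (X Y : Set V) (hdis : Disjoint X Y)
    (hX : X.ncard = 2 * k + 1)
    (a1 a2 a3 b1 b2 b3 : V)
    (ha1 : a1 ∈ X) (ha2 : a2 ∈ X) (ha3 : a3 ∈ X)
    (hb1 : b1 ∈ Y)
    (ha12 : a1 ≠ a2) (ha13 : a1 ≠ a3) (ha23 : a2 ≠ a3)
    (G3 : SimpleGraph V)
    (hG3 : ∀ x y, G3.Adj x y ↔
      ((x ≠ y ∧ ((x ∈ X ∧ y ∈ X) ∨ (x ∈ Y ∧ y ∈ Y))) ∨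
        ({x, y} : Set V) = {a1, b1} ∨ ({x, y} : Set V) = {a2, b2} ∨
        ({x, y} : Set V) = {a3, b3})) :
    (∀ (u : V) (c : G3.Walk u u), c.IsHamiltonianCycle →
      Even ({e : Sym2 V | e ∈ c.edges ∧ ∀ v ∈ e, v ∈ X}.ncard)) ∧
      cycleSpaceLen G3 (Fintype.card V) ≠ cycleSpace G3 := by
  classical
  have hinside (e : Sym2 V) : edgeInside (· ∈ X) e = true ↔ ∀ v ∈ e, v ∈ X := by
    simp [edgeInside_iff]
  have heven (u : V) (c : G3.Walk u u) (hc : c.IsHamiltonianCycle) :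
      Even (c.edges.countP (edgeInside (· ∈ X))) := by
    rw [hc.countP_edgeInside_eq hdis hX ha1 hb1 hG3]
    exact even_two_mul k
  have hadjX {x y : V} (hxy : x ≠ y) (hx : x ∈ X) (hy : y ∈ X) : G3.Adj x y :=
    (hG3 x y).2 (Or.inl ⟨hxy, Or.inl ⟨hx, hy⟩⟩)
  refine ⟨fun u c hc => ?_, ?_⟩
  · simp_rw [← hinside]
    rw [hc.edges_nodup.ncard_setOf_mem_and]
    exact heven u c hc
  · refine cycleSpaceLen_ne_cycleSpace_of_parity G3 _ _ (fun u c hc hlen =>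
        heven u c (Walk.isHamiltonianCycle_iff_isCycle_and_length_eq.2 ⟨hc, hlen⟩))
      _ (Walk.isCycle_triangle (hadjX ha12 ha1 ha2) (hadjX ha23 ha2 ha3)
        (hadjX ha13.symm ha3 ha1)) ?_
    simp [ha1, ha2, ha3, Nat.odd_iff]

/-- Construction A, graph `G₃`: complete graphs on `X` and `Y` joined by the three
edges `a₁b₁`, `a₂b₂`, `a₃b₃`.  Every Hamilton cycle contains an even number of edges
inside `X`, and `G₃` is not Hamilton-generated. -/
theorem stmt3 (k : ℕ) (hk : 2 ≤ k)
    (X Y : Set V) (hdis : Disjoint X Y) (hun : X ∪ Y = Set.univ)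
    (hX : X.ncard = 2 * k + 1) (hY : Y.ncard = 2 * k)
    (a1 a2 a3 b1 b2 b3 : V)
    (ha1 : a1 ∈ X) (ha2 : a2 ∈ X) (ha3 : a3 ∈ X)
    (hb1 : b1 ∈ Y) (hb2 : b2 ∈ Y) (hb3 : b3 ∈ Y)
    (ha12 : a1 ≠ a2) (ha13 : a1 ≠ a3) (ha23 : a2 ≠ a3)
    (hb12 : b1 ≠ b2) (hb13 : b1 ≠ b3) (hb23 : b2 ≠ b3)
    (G3 : SimpleGraph V)
    (hG3 : ∀ x y, G3.Adj x y ↔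
      ((x ≠ y ∧ ((x ∈ X ∧ y ∈ X) ∨ (x ∈ Y ∧ y ∈ Y))) ∨
        ({x, y} : Set V) = {a1, b1} ∨ ({x, y} : Set V) = {a2, b2} ∨
        ({x, y} : Set V) = {a3, b3})) :
    (∀ (u : V) (c : G3.Walk u u), c.IsHamiltonianCycle →
      Even ({e : Sym2 V | e ∈ c.edges ∧ ∀ v ∈ e, v ∈ X}.ncard)) ∧
      cycleSpaceLen G3 (Fintype.card V) ≠ cycleSpace G3 :=
  stmt3_general k X Y hdis hX a1 a2 a3 b1 b2 b3 ha1 ha2 ha3 hb1 ha12 ha13 ha23 G3 hG3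
end

section
/- Suppose 1/n ≪ ε_1, ε_2 ≪ 1 and ℓ ≤ ε_2 n. Let G be a graph on n vertices with minimum degree δ(G) ≥ (1 − ε_1)n. Then for any ℓ disjoint pairs of vertices (u_1,v_1), ..., (u_ℓ, v_ℓ) (all 2ℓ vertices distinct), the graph G together with the added edges u_1v_1, ..., u_ℓv_ℓ contains a Hamilton cycle passing through all ℓ of these added edges. -/
/-!
Arrange the vertices in a cyclic order in which every prescribed pair `uᵢ vᵢ` is consecutive, and
call a junction of the order a gap if it is an edge of neither `G` nor the prescribed pairs. Rotate
a gap `z x` to the end, so that the order reads `x … a y … z`. Reversing the segment `x … a`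
replaces the junctions `a y` and `z x` by `x y` and `z a`, and keeps every other junction. Every
vertex misses at most `d ≈ ε₁ n` vertices of `G` and there are at most `ℓ ≤ ε₂ n` prescribed pairs,
so once `2d + ℓ < n - 1` some split `a y` has `z ~ a`, `x ~ y` in `G` and `a y` not prescribed.
The reversal then removes the gap `z x` without creating a new one or breaking a prescribed pair.
Repeating until no gap is left gives a Hamilton cycle of `G + {uᵢ vᵢ}` through every `uᵢ vᵢ`.
-/

open SimpleGraph

namespace List

variable {α : Type*}

def pathEdges (L : List α) : List (Sym2 α) := zipWith (s(·, ·)) L L.tail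

def cycleEdges (L : List α) : List (Sym2 α) := (L ++ L.take 1).pathEdges

@[simp] theorem pathEdges_nil : ([] : List α).pathEdges = [] := rfl

@[simp] theorem pathEdges_singleton (x : α) : [x].pathEdges = [] := rfl

@[simp] theorem pathEdges_cons_cons (x y : α) (t : List α) :
    (x :: y :: t).pathEdges = s(x, y) :: (y :: t).pathEdges := rfl

theorem pathEdges_append_cons_cons : ∀ (P : List α) (a b : α) (Q : List α),
    (P ++ a :: b :: Q).pathEdges = (P ++ [a]).pathEdges ++ s(a, b) :: (b :: Q).pathEdges
  | [], _, _, _ => rfl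
  | [_], _, _, _ => rfl
  | p :: p' :: P, a, b, Q => by
    have ih := pathEdges_append_cons_cons (p' :: P) a b Q
    simp only [cons_append, pathEdges_cons_cons] at ih ⊢
    rw [ih]

theorem pathEdges_append {A B : List α} {a b : α} (ha : A.getLast? = some a)
    (hb : B.head? = some b) : (A ++ B).pathEdges = A.pathEdges ++ s(a, b) :: B.pathEdges := by
  obtain ⟨A, rfl⟩ := getLast?_eq_some_iff.1 ha
  obtain ⟨B, rfl⟩ := head?_eq_some_iff.1 hb
  simpa using pathEdges_append_cons_cons A a b B

theorem pathEdges_reverse : ∀ L : List α, L.reverse.pathEdges = L.pathEdges.reverse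
  | [] | [_] => rfl
  | x :: y :: t => by
    rw [reverse_cons, pathEdges_append (a := y) (b := x) (by simp) rfl, pathEdges_reverse (y :: t)]
    simp [Sym2.eq_swap]

theorem mem_pathEdges_of_infix {L : List α} {a b : α} (h : [a, b] <:+: L) :
    s(a, b) ∈ L.pathEdges := by
  obtain ⟨P, Q, rfl⟩ := h
  simp [pathEdges_append_cons_cons]

theorem exists_eq_append_of_mem_pathEdges :
    ∀ {L : List α} {e : Sym2 α}, e ∈ L.pathEdges → ∃ P a b Q, L = P ++ a :: b :: Q ∧ e = s(a, b)
  | [], _, h | [_], _, h => by simp at h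
  | x :: y :: t, e, h => by
    rcases mem_cons.1 (pathEdges_cons_cons x y t ▸ h) with rfl | h
    · exact ⟨[], x, y, t, rfl, rfl⟩
    · obtain ⟨P, a, b, Q, hL, rfl⟩ := exists_eq_append_of_mem_pathEdges h
      exact ⟨x :: P, a, b, Q, by rw [hL]; rfl, rfl⟩

theorem cycleEdges_append {A B : List α} {x a y z : α} (hx : A.head? = some x)
    (ha : A.getLast? = some a) (hy : B.head? = some y) (hz : B.getLast? = some z) :
    (A ++ B).cycleEdges = A.pathEdges ++ s(a, y) :: (B.pathEdges ++ [s(z, x)]) := by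
  obtain ⟨A, rfl⟩ := head?_eq_some_iff.1 hx
  rw [cycleEdges, cons_append, take_succ_cons, take_zero, ← cons_append, append_assoc,
    pathEdges_append ha (b := y) (by rw [head?_append, hy]; rfl), pathEdges_append hz rfl]
  rfl

theorem exists_head?_getLast? {L : List α} (h : L ≠ []) :
    ∃ x a, L.head? = some x ∧ L.getLast? = some a :=
  ⟨L.head h, L.getLast h, head?_eq_some_head h, getLast?_eq_some_getLast h⟩

theorem cycleEdges_append_perm (A B : List α) : (A ++ B).cycleEdges ~ (B ++ A).cycleEdges := by
  rcases eq_or_ne A [] with rfl | hA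
  · simp
  rcases eq_or_ne B [] with rfl | hB
  · simp
  obtain ⟨x, a, hx, ha⟩ := exists_head?_getLast? hA
  obtain ⟨y, z, hy, hz⟩ := exists_head?_getLast? hB
  rw [cycleEdges_append hx ha hy hz, cycleEdges_append hy hz hx ha]
  simpa using perm_append_comm (l₁ := A.pathEdges ++ [s(a, y)]) (l₂ := B.pathEdges ++ [s(z, x)])

theorem exists_rotation_of_mem_cycleEdges {L : List α} {e : Sym2 α} (he : e ∈ L.cycleEdges) :
    ∃ L' x z, L' ~ L ∧ L'.cycleEdges ~ L.cycleEdges ∧ L'.head? = some x ∧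
      L'.getLast? = some z ∧ e = s(z, x) := by
  obtain ⟨P, a, b, Q, hPQ, rfl⟩ := exists_eq_append_of_mem_pathEdges he
  obtain ⟨x, t, rfl⟩ := L.exists_cons_of_ne_nil (by rintro rfl; simp [cycleEdges] at he)
  rcases Q.eq_nil_or_concat with rfl | ⟨Q, w, rfl⟩
  · obtain ⟨hL, hb⟩ := append_inj' (s₁ := x :: t) (t₁ := [x]) (s₂ := P ++ [a]) (t₂ := [b])
      (by simpa using hPQ) rfl
    obtain rfl : x = b := by simpa using hb
    exact ⟨x :: t, x, a, .refl _, .refl _, rfl, by simp [hL], rfl⟩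
  · obtain ⟨hL, -⟩ := append_inj' (s₁ := x :: t) (t₁ := [x]) (s₂ := P ++ a :: b :: Q)
      (t₂ := [w]) (by simpa using hPQ) rfl
    refine ⟨b :: Q ++ (P ++ [a]), b, a, ?_, ?_, rfl, by rw [← append_assoc, getLast?_concat], rfl⟩
    · rw [hL]; exact perm_append_comm.trans (by simp)
    · rw [hL]; simpa using cycleEdges_append_perm (b :: Q) (P ++ [a])

theorem mem_cycleEdges_reverse_append {A B : List α} {x a y z : α} (hx : A.head? = some x)
    (ha : A.getLast? = some a) (hy : B.head? = some y) (hz : B.getLast? = some z) {e : Sym2 α}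
    (he : e ∈ (A ++ B).cycleEdges) (hay : e ≠ s(a, y)) (hzx : e ≠ s(z, x)) :
    e ∈ (A.reverse ++ B).cycleEdges := by
  rw [cycleEdges_append hx ha hy hz] at he
  rw [cycleEdges_append (by simpa) (by simpa) hy hz]
  simp only [pathEdges_reverse, mem_append, mem_reverse, mem_cons] at he ⊢
  tauto

theorem mem_cycleEdges_of_infix {L : List α} {a b : α} (h : [a, b] <:+: L) :
    s(a, b) ∈ L.cycleEdges :=
  mem_pathEdges_of_infix (h.trans (prefix_append _ _).isInfix)

end List

theorem List.Nodup.length_eq_card {α : Type*} [Fintype α] {L : List α} (hL : L.Nodup)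
    (hcov : ∀ a, a ∈ L) : L.length = Fintype.card α := by
  classical
  rw [← List.toFinset_card_of_nodup hL, ← Finset.card_univ,
    Finset.eq_univ_of_forall fun a => List.mem_toFinset.2 (hcov a)]

namespace SimpleGraph

variable {V : Type*}

def cycleGapCount (H : SimpleGraph V) [DecidableRel H.Adj] (L : List V) : ℕ :=
  L.cycleEdges.countP (· ∉ H.edgeSet)

theorem cycleGapCount_reverse_append_lt (H : SimpleGraph V) [DecidableRel H.Adj]
    {A B : List V} {x a y z : V} (hx : A.head? = some x) (ha : A.getLast? = some a)
    (hy : B.head? = some y) (hz : B.getLast? = some z)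
    (hxy : H.Adj x y) (hza : H.Adj z a) (hzx : ¬H.Adj z x) :
    H.cycleGapCount (A.reverse ++ B) < H.cycleGapCount (A ++ B) := by
  rw [cycleGapCount, cycleGapCount, List.cycleEdges_append hx ha hy hz,
    List.cycleEdges_append (by simpa) (by simpa) hy hz]
  simp [List.countP_append, List.countP_cons, List.pathEdges_reverse, hxy, hza, hzx]
  split_ifs <;> omega

theorem isChain_adj_of_pathEdges {H : SimpleGraph V} :
    ∀ {L : List V}, (∀ e ∈ L.pathEdges, e ∈ H.edgeSet) → L.IsChain H.Adj
  | [], _ => .nil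
  | [x], _ => .singleton x
  | x :: y :: t, h => List.isChain_cons_cons.2
    ⟨h s(x, y) (by simp), isChain_adj_of_pathEdges fun e he => h e (by simp [he])⟩

theorem exists_isHamiltonianCycle_of_cycleEdges [Fintype V] [DecidableEq V] {H : SimpleGraph V}
    {L : List V} (hL : L.Nodup) (hcov : ∀ v, v ∈ L) (h3 : 3 ≤ L.length)
    (hH : ∀ e ∈ L.cycleEdges, e ∈ H.edgeSet) :
    ∃ x, ∃ c : H.Walk x x, c.IsHamiltonianCycle ∧ c.edges = L.cycleEdges := by
  obtain ⟨x, t, rfl⟩ := L.exists_cons_of_ne_nil (by rintro rfl; simp at h3)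
  have hchain : (x :: t ++ [x]).IsChain H.Adj := isChain_adj_of_pathEdges hH
  obtain ⟨c, hsupp⟩ : ∃ c : H.Walk x x, c.support = x :: t ++ [x] :=
    ⟨(Walk.ofSupport _ (by simp) hchain).copy (by simp) (by simp),
      (Walk.support_copy _ _ _).trans (Walk.support_ofSupport _ _)⟩
  have hlen : c.length = t.length + 1 := by
    simpa [hsupp] using c.length_support.symm
  refine ⟨x, c, ?_, by rw [Walk.edges_eq_zipWith_support, hsupp]; rfl⟩
  rw [Walk.isHamiltonianCycle_iff_isCycle_and_length_eq, Walk.isCycle_iff_isPath_tail_and_le_length,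
    hlen]
  refine ⟨⟨Walk.IsPath.mk' ?_, h3⟩, hL.length_eq_card hcov⟩
  rw [Walk.support_tail_of_not_nil _ (Walk.not_nil_iff_lt_length.2 (by omega)), hsupp]
  exact (List.perm_append_comm.trans (by simp)).nodup_iff.2 hL

variable {G R : SimpleGraph V} {d : ℕ}

theorem exists_adj_adj_not_adj_of_injective [Finite V]
    (hdeg : ∀ v, (G.neighborSet v)ᶜ.ncard ≤ d) {m : ℕ} (hm : 2 * d + R.edgeSet.ncard < m)
    {f : Fin (m + 1) → V} (hf : Function.Injective f) (x z : V) :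
    ∃ i : Fin m,
      G.Adj z (f i.castSucc) ∧ G.Adj x (f i.succ) ∧ ¬R.Adj (f i.castSucc) (f i.succ) := by
  by_contra! h
  have h₁ : {i : Fin m | ¬G.Adj z (f i.castSucc)}.ncard ≤ d :=
    (Set.ncard_le_ncard_of_injOn (f ∘ Fin.castSucc) (t := (G.neighborSet z)ᶜ) (fun _ hi => hi)
      (hf.comp (Fin.castSucc_injective m)).injOn).trans (hdeg z)
  have h₂ : {i : Fin m | ¬G.Adj x (f i.succ)}.ncard ≤ d :=
    (Set.ncard_le_ncard_of_injOn (f ∘ Fin.succ) (t := (G.neighborSet x)ᶜ) (fun _ hi => hi)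
      (hf.comp (Fin.succ_injective m)).injOn).trans (hdeg x)
  have h₃ : {i : Fin m | R.Adj (f i.castSucc) (f i.succ)}.ncard ≤ R.edgeSet.ncard := by
    refine Set.ncard_le_ncard_of_injOn (fun i => s(f i.castSucc, f i.succ)) (fun _ hi => hi) ?_
    intro i _ j _ hij
    simp only [Sym2.eq_iff, hf.eq_iff, Fin.ext_iff, Fin.val_castSucc, Fin.val_succ] at hij
    exact Fin.ext (by omega)
  have hcover : (Set.univ : Set (Fin m)) ⊆
      {i | ¬G.Adj z (f i.castSucc)} ∪ {i | ¬G.Adj x (f i.succ)} ∪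
        {i | R.Adj (f i.castSucc) (f i.succ)} := by
    intro i _
    by_cases hz : G.Adj z (f i.castSucc) <;> by_cases hx : G.Adj x (f i.succ) <;>
      simp [hz, hx, h i]
  have hm' := Set.ncard_le_ncard hcover
  rw [Set.ncard_univ, Nat.card_eq_fintype_card, Fintype.card_fin] at hm'
  have := Set.ncard_union_le ({i : Fin m | ¬G.Adj z (f i.castSucc)} ∪ {i | ¬G.Adj x (f i.succ)})
    {i | R.Adj (f i.castSucc) (f i.succ)}
  have := Set.ncard_union_le {i : Fin m | ¬G.Adj z (f i.castSucc)} {i | ¬G.Adj x (f i.succ)}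
  omega

theorem exists_append_adj_adj_not_adj [Finite V]
    (hdeg : ∀ v, (G.neighborSet v)ᶜ.ncard ≤ d) {L : List V} (hL : L.Nodup)
    (hlen : 2 * d + R.edgeSet.ncard + 1 < L.length) (x z : V) :
    ∃ A B a y, L = A ++ B ∧ A.getLast? = some a ∧ B.head? = some y ∧
      G.Adj z a ∧ G.Adj x y ∧ ¬R.Adj a y := by
  obtain ⟨i, hz, hx, hR⟩ := exists_adj_adj_not_adj_of_injective (R := R) hdeg (m := L.length - 1)
    (by omega) (f := fun k => L[k.val]'(by omega))
    (fun j k h => Fin.ext ((hL.getElem_inj_iff).1 h)) x z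
  refine ⟨L.take (i + 1), L.drop (i + 1), _, _, (L.take_append_drop _).symm, ?_, ?_, hz, hx, hR⟩
  · simp [List.getLast?_take]
  · simp [List.head?_drop]

theorem exists_perm_cycleGapCount_lt [Finite V] [DecidableRel (G ⊔ R).Adj]
    (hdeg : ∀ v, (G.neighborSet v)ᶜ.ncard ≤ d) {L : List V} (hL : L.Nodup)
    (hlen : 2 * d + R.edgeSet.ncard + 1 < L.length) (hR : ∀ e ∈ R.edgeSet, e ∈ L.cycleEdges)
    (hgap : 0 < (G ⊔ R).cycleGapCount L) :
    ∃ L' : List V, L'.Perm L ∧ (∀ e ∈ R.edgeSet, e ∈ L'.cycleEdges) ∧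
      (G ⊔ R).cycleGapCount L' < (G ⊔ R).cycleGapCount L := by
  obtain ⟨e, he, hbad⟩ := List.countP_pos_iff.1 hgap
  obtain ⟨L₁, x, z, hperm, hcperm, hx, hz, rfl⟩ := List.exists_rotation_of_mem_cycleEdges he
  have hzx : ¬(G ⊔ R).Adj z x := by simpa using hbad
  obtain ⟨A, B, a, y, rfl, ha, hy, hza, hxy, hay⟩ :=
    exists_append_adj_adj_not_adj hdeg (hperm.nodup_iff.2 hL) (hperm.length_eq ▸ hlen) x z
  have hA : A ≠ [] := by rintro rfl; simp at ha
  have hB : B ≠ [] := by rintro rfl; simp at hy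
  rw [List.head?_append_of_ne_nil _ hA] at hx
  rw [List.getLast?_append_of_ne_nil _ hB] at hz
  refine ⟨A.reverse ++ B, (List.reverse_perm A).append_right B |>.trans hperm, ?_, ?_⟩
  · intro e' he'
    refine List.mem_cycleEdges_reverse_append hx ha hy hz (hcperm.mem_iff.2 (hR e' he')) ?_ ?_
    · rintro rfl; exact hay he'
    · rintro rfl; exact hzx (Or.inr he')
  · rw [cycleGapCount, cycleGapCount, ← hcperm.countP_eq]
    exact cycleGapCount_reverse_append_lt _ hx ha hy hz (Or.inl hxy) (Or.inl hza) hzx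

theorem exists_perm_cycleGapCount_eq_zero [Finite V] [DecidableRel (G ⊔ R).Adj]
    (hdeg : ∀ v, (G.neighborSet v)ᶜ.ncard ≤ d) {L : List V} (hL : L.Nodup)
    (hlen : 2 * d + R.edgeSet.ncard + 1 < L.length) (hR : ∀ e ∈ R.edgeSet, e ∈ L.cycleEdges) :
    ∃ L' : List V, L'.Perm L ∧ (∀ e ∈ R.edgeSet, e ∈ L'.cycleEdges) ∧
      (G ⊔ R).cycleGapCount L' = 0 := by
  rcases Nat.eq_zero_or_pos ((G ⊔ R).cycleGapCount L) with h | h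
  · exact ⟨L, .refl L, hR, h⟩
  obtain ⟨L', hperm, hR', hlt⟩ := exists_perm_cycleGapCount_lt hdeg hL hlen hR h
  obtain ⟨L'', hperm', hR'', h0⟩ :=
    exists_perm_cycleGapCount_eq_zero hdeg (hperm.nodup_iff.2 hL) (hperm.length_eq ▸ hlen) hR'
  exact ⟨L'', hperm'.trans hperm, hR'', h0⟩
termination_by (G ⊔ R).cycleGapCount L

theorem exists_isHamiltonianCycle_sup [Fintype V] [DecidableEq V]
    (hdeg : ∀ v, (G.neighborSet v)ᶜ.ncard ≤ d)
    (hcard : 2 * d + R.edgeSet.ncard + 1 < Fintype.card V) {L : List V} (hL : L.Nodup)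
    (hcov : ∀ v, v ∈ L) (hR : ∀ e ∈ R.edgeSet, e ∈ L.cycleEdges) :
    ∃ x, ∃ c : (G ⊔ R).Walk x x, c.IsHamiltonianCycle ∧ ∀ e ∈ R.edgeSet, e ∈ c.edges := by
  classical
  have hlen := hL.length_eq_card hcov
  obtain ⟨L', hperm, hR', h0⟩ := exists_perm_cycleGapCount_eq_zero hdeg hL (hlen ▸ hcard) hR
  -- Every vertex is a non-neighbour of itself, so `d ≥ 1` and there are at least three vertices.
  have hd : 0 < d := by
    obtain ⟨v⟩ : Nonempty V := Fintype.card_pos_iff.1 (by omega)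
    exact lt_of_lt_of_le ((Set.ncard_pos (s := (G.neighborSet v)ᶜ)).2 ⟨v, G.irrefl⟩) (hdeg v)
  obtain ⟨x, c, hc, hedges⟩ := exists_isHamiltonianCycle_of_cycleEdges (hperm.nodup_iff.2 hL)
    (fun v => hperm.mem_iff.2 (hcov v)) (by rw [hperm.length_eq]; omega)
    (fun e he => by simpa only [decide_eq_true_eq, not_not] using List.countP_eq_zero.1 h0 e he)
  exact ⟨x, c, hc, fun e he => hedges ▸ hR' e he⟩

theorem ncard_compl_neighborSet_le_floor [Fintype V] {ε : ℝ} {v : V}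
    (h : (1 - ε) * Fintype.card V ≤ (G.neighborSet v).ncard) :
    (G.neighborSet v)ᶜ.ncard ≤ ⌊ε * Fintype.card V⌋₊ := by
  refine Nat.le_floor ?_
  have hsum := Set.ncard_add_ncard_compl (G.neighborSet v)
  rw [Nat.card_eq_fintype_card] at hsum
  have hsum' : ((G.neighborSet v).ncard : ℝ) + (G.neighborSet v)ᶜ.ncard = Fintype.card V := by
    exact_mod_cast hsum
  linarith

end SimpleGraph

theorem two_mul_floor_add_add_one_lt {ε₁ ε₂ : ℝ} {n r : ℕ} (hε₁ : 0 ≤ ε₁) (hε₁c : ε₁ < 1 / 8)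
    (hε₂c : ε₂ < 1 / 8) (hn : 2 ≤ n) (hr : (r : ℝ) ≤ ε₂ * n) : 2 * ⌊ε₁ * n⌋₊ + r + 1 < n := by
  have hfl : (⌊ε₁ * n⌋₊ : ℝ) ≤ ε₁ * n := Nat.floor_le (by positivity)
  have hn2 : (2 : ℝ) ≤ n := by exact_mod_cast hn
  have h₁ := mul_le_mul_of_nonneg_right hε₁c.le (by positivity : (0 : ℝ) ≤ n)
  have h₂ := mul_le_mul_of_nonneg_right hε₂c.le (by positivity : (0 : ℝ) ≤ n)
  exact_mod_cast (show ((2 * ⌊ε₁ * n⌋₊ + r + 1 : ℕ) : ℝ) < n by push_cast; linarith)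

theorem exists_nodup_infix_of_injective_pairs {V : Type*} [Fintype V] [DecidableEq V] {ℓ : ℕ}
    (u v : Fin ℓ → V)
    (huv : Function.Injective (fun p : Fin ℓ × Bool => if p.2 then u p.1 else v p.1)) :
    ∃ L : List V, L.Nodup ∧ (∀ w, w ∈ L) ∧ ∀ i, [u i, v i] <:+: L := by
  have hu : ∀ i j, u i = u j → i = j := fun i j h =>
    congrArg Prod.fst (@huv (i, true) (j, true) h)
  have hv : ∀ i j, v i = v j → i = j := fun i j h =>
    congrArg Prod.fst (@huv (i, false) (j, false) h)
  have huv' : ∀ i j, u i ≠ v j := fun i j h => by simpa using @huv (i, true) (j, false) h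
  let P := (List.finRange ℓ).flatMap fun i => [u i, v i]
  have hP : P.Nodup := by
    refine List.nodup_flatMap.2 ⟨fun i _ => by simp [huv' i i], ?_⟩
    refine (List.nodup_finRange ℓ).imp fun {i j} hij w hwi hwj => ?_
    simp only [List.mem_cons, List.not_mem_nil, or_false] at hwi hwj
    rcases hwi with rfl | rfl <;> rcases hwj with h | h
    · exact hij (hu i j h)
    · exact huv' i j h
    · exact huv' j i h.symm
    · exact hij (hv i j h)
  refine ⟨P ++ (Finset.univ.toList.filter (· ∉ P)), ?_, fun w => ?_, fun i => ?_⟩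
  · exact List.nodup_append.2 ⟨hP, (Finset.nodup_toList _).filter _,
      fun a ha b hb => by rintro rfl; simp_all⟩
  · by_cases hw : w ∈ P
    · exact List.mem_append_left _ hw
    · exact List.mem_append_right _
        (List.mem_filter.2 ⟨Finset.mem_toList.2 (Finset.mem_univ w), by simpa⟩)
  · refine (List.flatMap_def ▸ List.infix_of_mem_flatten ?_).trans (List.infix_append [] P _)
    exact List.mem_map.2 ⟨i, List.mem_finRange i, rfl⟩

/-- Lemma (Fixpair, part 1): in a graph of very high minimum degree `(1-ε₁)n`, for any
`ℓ ≤ ε₂ n` disjoint pairs of vertices, the graph with the pairs added as edges has a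
Hamilton cycle through all the added edges. -/
theorem stmt7 : ∃ c : ℝ, 0 < c ∧ ∀ ε₁ ε₂ : ℝ, 0 < ε₁ → ε₁ < c → 0 < ε₂ → ε₂ < c →
    ∃ n₀ : ℕ, ∀ n : ℕ, n₀ ≤ n → ∀ ℓ : ℕ, (ℓ : ℝ) ≤ ε₂ * n →
    ∀ G : SimpleGraph (Fin n),
    (∀ v : Fin n, (1 - ε₁) * n ≤ ((G.neighborSet v).ncard : ℝ)) →
    ∀ u v : Fin ℓ → Fin n,
    Function.Injective (fun p : Fin ℓ × Bool => if p.2 then u p.1 else v p.1) →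
    ∃ (x : Fin n)
      (cyc : (G ⊔ SimpleGraph.fromEdgeSet {e | ∃ i : Fin ℓ, e = s(u i, v i)}).Walk x x),
      cyc.IsHamiltonianCycle ∧ ∀ i : Fin ℓ, s(u i, v i) ∈ cyc.edges := by
  refine ⟨1 / 8, by norm_num, fun ε₁ ε₂ hε₁ hε₁c _ hε₂c => ⟨2, fun n hn ℓ hℓ G hdeg u v huv => ?_⟩⟩
  classical
  set R := fromEdgeSet {e | ∃ i : Fin ℓ, e = s(u i, v i)}
  have hRedges : R.edgeSet ⊆ Set.range fun i => s(u i, v i) := fun e he => by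
    obtain ⟨⟨i, rfl⟩, -⟩ := edgeSet_fromEdgeSet _ ▸ he
    exact ⟨i, rfl⟩
  have hR : R.edgeSet.ncard ≤ ℓ := (Set.ncard_le_ncard hRedges).trans <| by
    rw [← Set.image_univ]; exact (Set.ncard_image_le (s := Set.univ)).trans (by simp)
  have hdeg' : ∀ w, (G.neighborSet w)ᶜ.ncard ≤ ⌊ε₁ * n⌋₊ := fun w => by
    simpa using ncard_compl_neighborSet_le_floor (G := G) (ε := ε₁) (by simpa using hdeg w)
  have hcard : 2 * ⌊ε₁ * n⌋₊ + R.edgeSet.ncard + 1 < Fintype.card (Fin n) := by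
    rw [Fintype.card_fin]
    exact two_mul_floor_add_add_one_lt hε₁.le hε₁c hε₂c hn ((Nat.cast_le.2 hR).trans hℓ)
  obtain ⟨L, hL, hcov, hpairs⟩ := exists_nodup_infix_of_injective_pairs u v huv
  obtain ⟨x, c, hc, hcR⟩ := exists_isHamiltonianCycle_sup hdeg' hcard hL hcov fun e he => by
    obtain ⟨i, rfl⟩ := hRedges he
    exact List.mem_cycleEdges_of_infix (hpairs i)
  refine ⟨x, c, hc, fun i => hcR _ ?_⟩
  rw [edgeSet_fromEdgeSet]
  exact ⟨⟨i, rfl⟩, fun h => by simpa using @huv (i, true) (i, false) (Sym2.mk_isDiag_iff.1 h)⟩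
end
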